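/- Let ℙ be a level-injective ω-chain, x ∈ ℙ_m, y ∈ ℙ_n with m ≤ n. Then x ≥ y in ℙ if and only if x^∈ ⊇ y^∈ in Sp ℙ. Consequently, p ↦ p^∈ is an order-isomorphism between ℙ and the family {p^∈ : p ∈ ℙ} ordered by inclusion. -/
import Mathlib


/-- `(lvl, step)` is an ω-chain: levels are finite, `step` goes from level `n`
to level `n+1`, and `step` is co-surjective (every element at a positive level
has a `step`-predecessor). -/
structure IsOmegaChain {α : Type*} (lvl : α → ℕ) (step : α → α → Prop) : Prop where
  fin : ∀ n : ℕ, {a : α | lvl a = n}.Finite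
  hstep : ∀ a b : α, step a b → lvl b = lvl a + 1
  cosurj : ∀ b : α, 0 < lvl b → ∃ a : α, step a b

/-- Level-injectivity: each `step` relation is co-injective. -/
def LevelInjective {α : Type*} (step : α → α → Prop) : Prop :=
  ∀ a : α, ∃ b : α, step a b ∧ ∀ a' : α, step a' b → a' = a

/-- The ω-chain ordering `a ≥ b`: the reflexive–transitive closure of `step`. -/
def chainGe {α : Type*} (step : α → α → Prop) : α → α → Prop :=
  Relation.ReflTransGen step

/-- A band: a finite subset comparable with every element. -/
def BandC {α : Type*} (step : α → α → Prop) (B : Set α) : Prop :=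
  B.Finite ∧ ∀ p : α, ∃ b ∈ B, chainGe step b p ∨ chainGe step p b

/-- A cap: a subset refined from below by a band. -/
def CapC {α : Type*} (step : α → α → Prop) (C : Set α) : Prop :=
  ∃ B : Set α, BandC step B ∧ ∀ b ∈ B, ∃ c ∈ C, chainGe step c b

/-- A selector: a subset meeting every cap. -/
def SelectorC {α : Type*} (step : α → α → Prop) (S : Set α) : Prop :=
  ∀ C : Set α, CapC step C → (S ∩ C).Nonempty

/-- A minimal selector. -/
def MinSelectorC {α : Type*} (step : α → α → Prop) (S : Set α) : Prop :=
  SelectorC step S ∧ ∀ S' ⊆ S, SelectorC step S' → S' = S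

/-- The spectrum: the set of minimal selectors. -/
def SpecC {α : Type*} (step : α → α → Prop) : Type _ :=
  {S : Set α // MinSelectorC step S}

/-- The basic set `p^∈ = {S ∈ Sp : p ∈ S}`. -/
def pinC {α : Type*} (step : α → α → Prop) (p : α) : Set (SpecC step) :=
  {S | p ∈ S.1}

open Relation

theorem chainGe_lvl_le {α : Type*} {lvl : α → ℕ} {step : α → α → Prop}
    (h : IsOmegaChain lvl step) {a b : α} (hab : chainGe step a b) : lvl a ≤ lvl b := by
  induction hab with
  | refl => exact le_refl _
  | tail _ hst ih => have := h.hstep _ _ hst; omega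

theorem exists_ancestor {α : Type*} {lvl : α → ℕ} {step : α → α → Prop}
    (h : IsOmegaChain lvl step) :
    ∀ (k : ℕ) (q : α) (m : ℕ), lvl q = m + k → ∃ b, lvl b = m ∧ chainGe step b q := by
  intro k
  induction k with
  | zero => exact fun q m hm => ⟨q, by omega, Relation.ReflTransGen.refl⟩
  | succ k ih =>
    intro q m hm
    obtain ⟨a, ha⟩ := h.cosurj q (by omega)
    have hla := h.hstep _ _ ha
    obtain ⟨b, hb, hchain⟩ := ih a m (by omega)
    exact ⟨b, hb, hchain.tail ha⟩

theorem pin_mono {α : Type*} {step : α → α → Prop} {x y : α}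
    (hxy : chainGe step x y) : pinC step y ⊆ pinC step x := by
  rintro ⟨S, hSsel, hSmin⟩ hyS
  simp only [pinC, Set.mem_setOf_eq] at *
  by_contra hxS
  have hne : S \ {y} ≠ S := by
    intro hEq
    have : y ∈ S \ {y} := by rw [hEq]; exact hyS
    exact this.2 rfl
  have hnotsel : ¬ SelectorC step (S \ {y}) :=
    fun hsel => hne (hSmin _ Set.diff_subset hsel)
  rw [SelectorC] at hnotsel
  push_neg at hnotsel
  obtain ⟨C, hC, hCempty⟩ := hnotsel
  have hC' : CapC step (insert x (C \ {y})) := by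
    obtain ⟨B, hB, hBC⟩ := hC
    refine ⟨B, hB, fun b hb => ?_⟩
    obtain ⟨c, hcC, hcb⟩ := hBC b hb
    by_cases hcy : c = y
    · exact ⟨x, Set.mem_insert _ _, hxy.trans (hcy ▸ hcb)⟩
    · exact ⟨c, Set.mem_insert_of_mem _ ⟨hcC, hcy⟩, hcb⟩
  obtain ⟨z, hzS, hzC⟩ := hSsel _ hC'
  rcases hzC with rfl | hz
  · exact hxS hzS
  · have hne2 : (S \ {y} ∩ C).Nonempty := ⟨z, ⟨hzS, hz.2⟩, hz.1⟩
    exact hne2.ne_empty hCempty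

theorem key_construction {α : Type*} {lvl : α → ℕ} {step : α → α → Prop}
    (h : IsOmegaChain lvl step) (hinj : LevelInjective step) (y : α) :
    ∃ S : Set α, MinSelectorC step S ∧ y ∈ S ∧
      ∀ x, x ∈ S → lvl x ≤ lvl y → chainGe step x y := by
  classical
  set c : α → α := fun a => Classical.choose (hinj a) with hcdef
  have hc1 : ∀ a, step a (c a) := fun a => (Classical.choose_spec (hinj a)).1
  have hc2 : ∀ a a', step a' (c a) → a' = a := fun a => (Classical.choose_spec (hinj a)).2
  set d : ℕ → α := fun k => c^[k] y with hddef
  have hd0 : d 0 = y := rfl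
  have hdsucc : ∀ k, d (k+1) = c (d k) := fun k => Function.iterate_succ_apply' c k y
  have hstepd : ∀ k, step (d k) (d (k+1)) := fun k => (hdsucc k) ▸ hc1 (d k)
  have hlvld : ∀ k, lvl (d k) = lvl y + k := by
    intro k; induction k with
    | zero => simp [hd0]
    | succ k ih => have := h.hstep _ _ (hstepd k); omega
  have hchaind : ∀ k j, j ≤ k → chainGe step (d j) (d k) := by
    intro k; induction k with
    | zero =>
      intro j hj
      have : j = 0 := by omega
      subst this; exact Relation.ReflTransGen.refl
    | succ k ih =>
      intro j hj
      rcases Nat.lt_or_ge j (k+1) with h' | h'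
      · exact (ih j (by omega)).tail (hstepd k)
      · have : j = k+1 := by omega
        subst this; exact Relation.ReflTransGen.refl
  have hback : ∀ k q, chainGe step q (d k) →
      chainGe step q y ∨ ∃ j, 1 ≤ j ∧ j ≤ k ∧ q = d j := by
    intro k; induction k with
    | zero => intro q hq; exact Or.inl (hd0 ▸ hq)
    | succ k ih =>
      intro q hq
      rcases hq.cases_tail with rfl | ⟨m, hqm, hmd⟩
      · exact Or.inr ⟨k+1, by omega, by omega, rfl⟩
      · have hm : m = d k := hc2 (d k) m ((hdsucc k) ▸ hmd)
        subst hm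
        rcases ih q hqm with h1 | ⟨j, hj1, hj2, rfl⟩
        · exact Or.inl h1
        · exact Or.inr ⟨j, hj1, by omega, rfl⟩
  have hdesc : ∀ (p : α) (k : ℕ), chainGe step p (c^[k] p) ∧ lvl (c^[k] p) = lvl p + k := by
    intro p k; induction k with
    | zero => exact ⟨Relation.ReflTransGen.refl, by simp⟩
    | succ k ih =>
      rw [Function.iterate_succ_apply']
      exact ⟨ih.1.tail (hc1 _), by have := h.hstep _ _ (hc1 (c^[k] p)); omega⟩
  have hlevelband : ∀ n, BandC step {a | lvl a = n} := by
    intro n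
    refine ⟨h.fin n, fun p => ?_⟩
    rcases Nat.le_total n (lvl p) with hle | hle
    · obtain ⟨b, hbl, hbc⟩ := exists_ancestor h (lvl p - n) p n (by omega)
      exact ⟨b, hbl, Or.inl hbc⟩
    · obtain ⟨h1, h2⟩ := hdesc p (n - lvl p)
      exact ⟨c^[n - lvl p] p, by simp only [Set.mem_setOf_eq]; omega, Or.inr h1⟩
  set S : Set α := {p | ∃ k, chainGe step p (d k)} with hSdef
  have hsel : SelectorC step S := by
    intro C hC
    obtain ⟨B, ⟨hBfin, hBband⟩, hBC⟩ := hC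
    obtain ⟨N, hN⟩ : ∃ N, ∀ b ∈ B, lvl b ≤ N := by
      obtain ⟨N, hN⟩ := (hBfin.image lvl).bddAbove
      exact ⟨N, fun b hb => hN (Set.mem_image_of_mem lvl hb)⟩
    obtain ⟨b, hbB, hcomp⟩ := hBband (d (N+1))
    have hbk : chainGe step b (d (N+1)) := by
      rcases hcomp with h1 | h1
      · exact h1
      · exfalso
        have h2 := chainGe_lvl_le h h1
        have h3 := hlvld (N+1)
        have h4 := hN b hbB
        omega
    obtain ⟨cc, hccC, hccb⟩ := hBC b hbB
    exact ⟨cc, ⟨N+1, hccb.trans hbk⟩, hccC⟩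
  have hmin : ∀ S' ⊆ S, SelectorC step S' → S' = S := by
    intro S' hsub hsel'
    apply Set.Subset.antisymm hsub
    intro p hp
    by_contra hpS'
    obtain ⟨k, hpk⟩ := hp
    have hcap : CapC step (insert p ({a | lvl a = lvl y + k + 1} \ {d (k+1)})) := by
      refine ⟨{a | lvl a = lvl y + k + 1}, hlevelband _, fun b hb => ?_⟩
      by_cases hbd : b = d (k+1)
      · exact ⟨p, Set.mem_insert _ _, hbd ▸ (hpk.trans (hchaind (k+1) k (by omega)))⟩
      · exact ⟨b, Set.mem_insert_of_mem _ ⟨hb, hbd⟩, Relation.ReflTransGen.refl⟩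
    obtain ⟨z, hzS', hzC⟩ := hsel' _ hcap
    rcases hzC with rfl | ⟨hzl, hzd⟩
    · exact hpS' hzS'
    · obtain ⟨j, hzj⟩ := hsub hzS'
      simp only [Set.mem_setOf_eq] at hzl
      rcases hback j z hzj with h1 | ⟨i, hi1, hi2, rfl⟩
      · have := chainGe_lvl_le h h1; omega
      · have h2 := hlvld i
        have h3 : i = k + 1 := by omega
        exact hzd (by rw [h3]; exact rfl)
  refine ⟨S, ⟨hsel, hmin⟩, ⟨0, hd0 ▸ Relation.ReflTransGen.refl⟩, fun x hx hlx => ?_⟩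
  obtain ⟨k, hk⟩ := hx
  rcases hback k x hk with h1 | ⟨j, hj1, hj2, rfl⟩
  · exact h1
  · exfalso; have := hlvld j; omega

/-- For a level-injective ω-chain: for `x` of level `m` and `y` of level `n` with
`m ≤ n`, `x ≥ y` iff `x^∈ ⊇ y^∈`; consequently `p ↦ p^∈` is an order-isomorphism
of the ω-chain onto the family of sets `p^∈` (with level data) ordered by inclusion. -/
theorem stmt11 {α : Type*} (lvl : α → ℕ) (step : α → α → Prop)
    (h : IsOmegaChain lvl step) (hinj : LevelInjective step) :
    (∀ x y : α, lvl x ≤ lvl y →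
        (chainGe step x y ↔ pinC step y ⊆ pinC step x)) ∧
      ∀ x y : α, chainGe step x y ↔
        (lvl x ≤ lvl y ∧ pinC step y ⊆ pinC step x) := by
  have main : ∀ x y : α, lvl x ≤ lvl y →
      (chainGe step x y ↔ pinC step y ⊆ pinC step x) := by
    intro x y hxy
    constructor
    · exact pin_mono
    · intro hsub
      obtain ⟨S, hSmin, hyS, hkey⟩ := key_construction h hinj y
      have hyS' : (⟨S, hSmin⟩ : SpecC step) ∈ pinC step y := hyS
      have hxS : (⟨S, hSmin⟩ : SpecC step) ∈ pinC step x := hsub hyS'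
      exact hkey x hxS hxy
  refine ⟨main, fun x y => ⟨fun hc => ⟨chainGe_lvl_le h hc, (main x y (chainGe_lvl_le h hc)).1 hc⟩,
    fun hp => (main x y hp.1).2 hp.2⟩⟩
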